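/- Let A be an ordered semiring, F a frame, and f : A → F a subadditive morphism (where F is viewed as an ordered semiring with addition the binary join, zero the bottom element, multiplication the binary meet, and one the top element). Then there exists a unique frame homomorphism g from the frame of radical ideals of A (ordered by inclusion) to F — i.e., a unique map g preserving arbitrary joins and finite meets — such that g(√⟨x⟩) = f(x) for all x ∈ A. -/

import Mathlib

universe u v

section Defs

variable {A : Type u} [CommSemiring A] [Preorder A]

/-- The set `⟨S⟩ = {z | ∃ m, ∃ s₁,…,s_m ∈ S, ∃ y₁,…,y_m, z ≤ s₁y₁ + ⋯ + s_m y_m}`,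
the smallest ideal of the ordered semiring `A` containing `S`. -/
def span (S : Set A) : Set A :=
  {z : A | ∃ (m : ℕ) (s y : Fin m → A), (∀ i, s i ∈ S) ∧ z ≤ ∑ i, s i * y i}

/-- `I` is an ideal of the ordered semiring `A`: downward closed, contains `0`,
closed under addition, and absorbing under multiplication. -/
def IsIdeal (I : Set A) : Prop :=
  (∀ ⦃x y : A⦄, x ≤ y → y ∈ I → x ∈ I) ∧ (0 : A) ∈ I ∧
    (∀ ⦃x y : A⦄, x ∈ I → y ∈ I → x + y ∈ I) ∧
    ∀ x y : A, x ∈ I ∨ y ∈ I → x * y ∈ I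

/-- The product `I · J` of two ideals: the ideal generated by `{x * y | x ∈ I, y ∈ J}`. -/
def iprod (I J : Set A) : Set A := span (Set.image2 (· * ·) I J)

/-- The radical `√I = {x | ∃ n ≥ 1, x ^ n ∈ I}` of an ideal `I`. -/
def radical (I : Set A) : Set A := {x : A | ∃ n : ℕ, 1 ≤ n ∧ x ^ n ∈ I}

/-- `I` is a radical ideal of the ordered semiring `A`. -/
def IsRadicalIdeal (I : Set A) : Prop :=
  IsIdeal I ∧ ∀ (x : A) (n : ℕ), 1 ≤ n → x ^ n ∈ I → x ∈ I

/-- `I` is a prime ideal of the ordered semiring `A`. -/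
def IsPrimeIdeal (I : Set A) : Prop :=
  IsIdeal I ∧ (1 : A) ∉ I ∧ ∀ x y : A, x * y ∈ I → x ∈ I ∨ y ∈ I

/-- `I` is a maximal ideal of the ordered semiring `A`. -/
def IsMaximalIdeal (I : Set A) : Prop :=
  IsIdeal I ∧ I ≠ Set.univ ∧ ∀ J : Set A, IsIdeal J → I ⊆ J → J = I ∨ J = Set.univ

end Defs

section Aux

variable {A : Type u} [CommSemiring A] [Preorder A]
    [CovariantClass A A (· + ·) (· ≤ ·)] [CovariantClass A A (· * ·) (· ≤ ·)]

set_option linter.unusedSectionVars false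

lemma aux_add_le_add {a b c d : A} (h1 : a ≤ b) (h2 : c ≤ d) : a + c ≤ b + d :=
  le_trans (add_le_add_right h2 a) (by rw [add_comm a d, add_comm b d]; exact add_le_add_right h1 d)

lemma aux_mul_le_mul_right {a b : A} (h : a ≤ b) (c : A) : a * c ≤ b * c := by
  rw [mul_comm a c, mul_comm b c]; exact mul_le_mul_right h c

lemma aux_pow_le_pow {a b : A} (h : a ≤ b) : ∀ n : ℕ, a ^ n ≤ b ^ n := by
  intro n
  induction n with
  | zero => simp
  | succ n ih =>
    rw [pow_succ, pow_succ]
    exact le_trans (mul_le_mul_right h _) (aux_mul_le_mul_right ih b)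

lemma mem_span_self {S : Set A} {x : A} (hx : x ∈ S) : x ∈ span S :=
  ⟨1, fun _ => x, fun _ => 1, fun _ => hx, by simp⟩

lemma subset_span {S : Set A} : S ⊆ span S := fun _ hx => mem_span_self hx

lemma span_mono {S T : Set A} (h : S ⊆ T) : span S ⊆ span T := by
  rintro z ⟨m, s, y, hs, hz⟩
  exact ⟨m, s, y, fun i => h (hs i), hz⟩

lemma radical_mono {I J : Set A} (h : I ⊆ J) : radical I ⊆ radical J := by
  rintro x ⟨n, hn, hx⟩
  exact ⟨n, hn, h hx⟩

lemma subset_radical {I : Set A} : I ⊆ radical I := fun x hx => ⟨1, le_refl _, by simpa⟩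

lemma span_isIdeal (S : Set A) : IsIdeal (span S) := by
  refine ⟨?_, ?_, ?_, ?_⟩
  · rintro x y hxy ⟨m, s, t, hs, hy⟩
    exact ⟨m, s, t, hs, le_trans hxy hy⟩
  · exact ⟨0, Fin.elim0, Fin.elim0, fun i => i.elim0, by simp⟩
  · rintro x y ⟨m, s, t, hs, hx⟩ ⟨m', s', t', hs', hy⟩
    refine ⟨m + m', Fin.append s s', Fin.append t t', ?_, ?_⟩
    · intro i
      refine i.addCases (fun j => ?_) (fun j => ?_)
      · rw [Fin.append_left]; exact hs j
      · rw [Fin.append_right]; exact hs' j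
    · have he : ∑ i : Fin (m+m'), Fin.append s s' i * Fin.append t t' i
          = (∑ i : Fin m, s i * t i) + ∑ i : Fin m', s' i * t' i := by
        rw [Fin.sum_univ_add]
        simp [Fin.append_left, Fin.append_right]
      rw [he]; exact aux_add_le_add hx hy
  · rintro x y (⟨m, s, t, hs, hx⟩ | ⟨m, s, t, hs, hy⟩)
    · refine ⟨m, s, fun i => t i * y, hs, ?_⟩
      calc x * y ≤ (∑ i, s i * t i) * y := aux_mul_le_mul_right hx y
        _ = ∑ i, s i * (t i * y) := by rw [Finset.sum_mul]; exact Finset.sum_congr rfl (fun i _ => by ring)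
    · refine ⟨m, s, fun i => t i * x, hs, ?_⟩
      calc x * y = y * x := mul_comm x y
        _ ≤ (∑ i, s i * t i) * x := aux_mul_le_mul_right hy x
        _ = ∑ i, s i * (t i * x) := by rw [Finset.sum_mul]; exact Finset.sum_congr rfl (fun i _ => by ring)


lemma IsIdeal.finsum {I : Set A} (hI : IsIdeal I) {m : ℕ} {z : Fin m → A}
    (h : ∀ i, z i ∈ I) : ∑ i, z i ∈ I := by
  induction m with
  | zero => simpa using hI.2.1
  | succ n ih =>
    rw [Fin.sum_univ_succ]
    exact hI.2.2.1 (h 0) (ih (fun i => h i.succ))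

lemma radical_isRadicalIdeal {I : Set A} (hI : IsIdeal I) : IsRadicalIdeal (radical I) := by
  constructor
  · refine ⟨?_, ⟨1, le_refl _, by simpa using hI.2.1⟩, ?_, ?_⟩
    · rintro x y hxy ⟨n, hn, hy⟩
      exact ⟨n, hn, hI.1 (aux_pow_le_pow hxy n) hy⟩
    · rintro x y ⟨n, hn, hx⟩ ⟨m, hm, hy⟩
      refine ⟨n + m, by omega, ?_⟩
      rw [add_pow]
      refine hI.1 (le_of_eq (Finset.sum_congr rfl (fun i _ => rfl))) ?_
      have : ∀ i ∈ Finset.range (n + m + 1),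
          x ^ i * y ^ (n + m - i) * ((n+m).choose i : A) ∈ I := by
        intro i hi
        rcases le_or_gt n i with h | h
        · have : x ^ i * y ^ (n + m - i) * ((n+m).choose i : A)
              = x ^ n * (x ^ (i - n) * y ^ (n + m - i) * ((n+m).choose i : A)) := by
            have h2 : i = n + (i - n) := by omega
            rw [h2, pow_add]; ring_nf
            rw [show n + (i - n) - n = i - n by omega]
          rw [this]
          exact hI.2.2.2 _ _ (Or.inl hx)
        · have : x ^ i * y ^ (n + m - i) * ((n+m).choose i : A)
              = y ^ m * (x ^ i * y ^ (n - i) * ((n+m).choose i : A)) := by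
            have h2 : n + m - i = m + (n - i) := by omega
            rw [h2, pow_add]; ring
          rw [this]
          exact hI.2.2.2 _ _ (Or.inl hy)
      exact Finset.sum_induction _ (· ∈ I) (fun a b ha hb => hI.2.2.1 ha hb) hI.2.1 this
    · rintro x y (⟨n, hn, hx⟩ | ⟨n, hn, hy⟩)
      · exact ⟨n, hn, by rw [mul_pow]; exact hI.2.2.2 _ _ (Or.inl hx)⟩
      · exact ⟨n, hn, by rw [mul_pow]; exact hI.2.2.2 _ _ (Or.inr hy)⟩
  · rintro x n hn ⟨m, hm, hx⟩
    refine ⟨n * m, Nat.one_le_iff_ne_zero.2 (by positivity), ?_⟩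
    rwa [pow_mul]

lemma span_subset_of_isIdeal {I : Set A} (hI : IsIdeal I) : span I ⊆ I := by
  rintro z ⟨m, s, t, hs, hz⟩
  refine hI.1 hz (hI.finsum (fun i => hI.2.2.2 _ _ (Or.inl (hs i))))

lemma radical_span_self {I : Set A} (hI : IsRadicalIdeal I) : radical (span I) = I := by
  apply Set.Subset.antisymm
  · rintro x ⟨n, hn, hx⟩
    exact hI.2 x n hn (span_subset_of_isIdeal hI.1 hx)
  · exact subset_trans subset_span subset_radical

end Aux

section Main

variable {A : Type u} [CommSemiring A] [Preorder A]
    [CovariantClass A A (· + ·) (· ≤ ·)] [CovariantClass A A (· * ·) (· ≤ ·)]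
    {F : Type v} [Order.Frame F]

lemma f_pow_eq (f : A → F) (hf_mul : ∀ x y : A, f (x * y) = f x ⊓ f y)
    {n : ℕ} (hn : 1 ≤ n) (x : A) : f (x ^ n) = f x := by
  induction n with
  | zero => omega
  | succ n ih =>
    rcases Nat.eq_or_lt_of_le hn with h | h
    · rw [← h, pow_one]
    · rw [pow_succ, hf_mul, ih (by omega), inf_idem]

lemma f_sum_le (f : A → F) (hf0 : f 0 ≤ ⊥) (hf_add : ∀ x y : A, f (x + y) ≤ f x ⊔ f y)
    {m : ℕ} (z : Fin m → A) : f (∑ i, z i) ≤ ⨆ i, f (z i) := by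
  induction m with
  | zero => simpa using le_trans hf0 bot_le
  | succ n ih =>
    rw [Fin.sum_univ_succ]
    refine le_trans (hf_add _ _) (sup_le (le_iSup (fun i => f (z i)) 0) ?_)
    exact le_trans (ih (fun i => z i.succ)) (iSup_le fun i => le_iSup (fun i => f (z i)) i.succ)

lemma key_bound (f : A → F) (hf_mono : Monotone f) (hf0 : f 0 ≤ ⊥)
    (hf_add : ∀ x y : A, f (x + y) ≤ f x ⊔ f y)
    (hf_mul : ∀ x y : A, f (x * y) = f x ⊓ f y)
    {S : Set A} {z : A} (hz : z ∈ radical (span S)) : f z ≤ ⨆ x ∈ S, f x := by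
  obtain ⟨n, hn, m, s, t, hs, hle⟩ := hz
  calc f z = f (z ^ n) := (f_pow_eq f hf_mul hn z).symm
    _ ≤ f (∑ i, s i * t i) := hf_mono hle
    _ ≤ ⨆ i, f (s i * t i) := f_sum_le f hf0 hf_add _
    _ ≤ ⨆ x ∈ S, f x := by
        refine iSup_le fun i => ?_
        rw [hf_mul]
        exact le_trans inf_le_left (le_iSup₂ (f := fun x _ => f x) (s i) (hs i))

theorem stmt11' (f : A → F) (hf_mono : Monotone f) (hf0 : f 0 ≤ ⊥) (hf1 : f 1 = ⊤)
    (hf_add : ∀ x y : A, f (x + y) ≤ f x ⊔ f y)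
    (hf_mul : ∀ x y : A, f (x * y) = f x ⊓ f y) :
    ∃ g : Set A → F,
      ((∀ (ι : Type u) (J : ι → Set A), (∀ l, IsRadicalIdeal (J l)) →
            g (radical (span (⋃ l, J l))) = ⨆ l, g (J l)) ∧
          (∀ I J : Set A, IsRadicalIdeal I → IsRadicalIdeal J → g (I ∩ J) = g I ⊓ g J) ∧
          g Set.univ = ⊤ ∧
          ∀ x : A, g (radical (span {x})) = f x) ∧
        ∀ g' : Set A → F,
          ((∀ (ι : Type u) (J : ι → Set A), (∀ l, IsRadicalIdeal (J l)) →
              g' (radical (span (⋃ l, J l))) = ⨆ l, g' (J l)) ∧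
            (∀ I J : Set A, IsRadicalIdeal I → IsRadicalIdeal J → g' (I ∩ J) = g' I ⊓ g' J) ∧
            g' Set.univ = ⊤ ∧
            ∀ x : A, g' (radical (span {x})) = f x) →
          ∀ I : Set A, IsRadicalIdeal I → g' I = g I := by
  set g : Set A → F := fun I => ⨆ x ∈ I, f x with hg
  have g_mono : ∀ {I J : Set A}, I ⊆ J → g I ≤ g J := by
    intro I J h
    exact iSup₂_le fun x hx => le_iSup₂ (f := fun x _ => f x) x (h hx)
  have g_rad_span : ∀ S : Set A, g (radical (span S)) = g S := by
    intro S
    refine le_antisymm (iSup₂_le fun z hz =>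
      key_bound f hf_mono hf0 hf_add hf_mul hz) (g_mono ?_)
    exact subset_trans subset_span subset_radical
  refine ⟨g, ⟨?_, ?_, ?_, ?_⟩, ?_⟩
  · intro ι J hJ
    rw [g_rad_span, hg]
    simp only [iSup_iUnion]
  · intro I J hI hJ
    refine le_antisymm (le_inf (g_mono Set.inter_subset_left)
      (g_mono Set.inter_subset_right)) ?_
    rw [hg]
    simp only [iSup_inf_eq, inf_iSup_eq]
    refine iSup₂_le fun x hx => iSup₂_le fun y hy => ?_
    rw [← hf_mul]
    exact le_iSup₂ (f := fun z (_ : z ∈ I ∩ J) => f z) (y * x)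
      ⟨hI.1.2.2.2 y x (Or.inl hy), hJ.1.2.2.2 y x (Or.inr hx)⟩
  · refine le_antisymm le_top ?_
    rw [← hf1]
    exact le_iSup₂ (f := fun x (_ : x ∈ Set.univ) => f x) 1 trivial
  · intro x
    rw [g_rad_span]
    refine le_antisymm (iSup₂_le fun y hy => ?_) ?_
    · have h : y = x := hy
      subst h; exact le_rfl
    exact le_iSup₂ (f := fun y (_ : y ∈ ({x} : Set A)) => f y) x rfl
  · rintro g' ⟨hjoin, -, -, hx⟩ I hI
    have hrep : radical (span (⋃ x : I, radical (span {(x : A)}))) = I := by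
      apply Set.Subset.antisymm
      · have h1 : (⋃ x : I, radical (span {(x : A)})) ⊆ I := by
          exact Set.iUnion_subset fun x => subset_trans
            (radical_mono (span_mono (Set.singleton_subset_iff.2 x.2)))
            (radical_span_self hI).subset
        calc radical (span (⋃ x : I, radical (span {(x : A)})))
            ⊆ radical (span I) := radical_mono (span_mono h1)
          _ = I := radical_span_self hI
      · intro z hz
        have : z ∈ ⋃ x : I, radical (span {(x : A)}) :=
          Set.mem_iUnion.2 ⟨⟨z, hz⟩, subset_radical (mem_span_self rfl)⟩
        exact subset_radical (subset_span this)
    have := hjoin I (fun x : I => radical (span {(x : A)}))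
      (fun x => radical_isRadicalIdeal (span_isIdeal _))
    rw [hrep] at this
    rw [this, hg]
    simp only [hx]
    rw [iSup_subtype']

/-- universal property of the frame of radical ideals: every subadditive
morphism `f : A → F` into a frame factors uniquely through `x ↦ √⟨x⟩` via a frame
homomorphism `g` (a map preserving arbitrary joins and finite meets). -/
theorem stmt11 {A : Type u} [CommSemiring A] [Preorder A]
    [CovariantClass A A (· + ·) (· ≤ ·)] [CovariantClass A A (· * ·) (· ≤ ·)]
    {F : Type v} [Order.Frame F]
    (f : A → F) (hf_mono : Monotone f) (hf0 : f 0 ≤ ⊥) (hf1 : f 1 = ⊤)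
    (hf_add : ∀ x y : A, f (x + y) ≤ f x ⊔ f y)
    (hf_mul : ∀ x y : A, f (x * y) = f x ⊓ f y) :
    ∃ g : Set A → F,
      ((∀ (ι : Type u) (J : ι → Set A), (∀ l, IsRadicalIdeal (J l)) →
            g (radical (span (⋃ l, J l))) = ⨆ l, g (J l)) ∧
          (∀ I J : Set A, IsRadicalIdeal I → IsRadicalIdeal J → g (I ∩ J) = g I ⊓ g J) ∧
          g Set.univ = ⊤ ∧
          ∀ x : A, g (radical (span {x})) = f x) ∧
        ∀ g' : Set A → F,
          ((∀ (ι : Type u) (J : ι → Set A), (∀ l, IsRadicalIdeal (J l)) →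
              g' (radical (span (⋃ l, J l))) = ⨆ l, g' (J l)) ∧
            (∀ I J : Set A, IsRadicalIdeal I → IsRadicalIdeal J → g' (I ∩ J) = g' I ⊓ g' J) ∧
            g' Set.univ = ⊤ ∧
            ∀ x : A, g' (radical (span {x})) = f x) →
          ∀ I : Set A, IsRadicalIdeal I → g' I = g I := by
  exact stmt11' f hf_mono hf0 hf1 hf_add hf_mul
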